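/- Case (VI)(ii): Let η, η' be characters of Γ with η|_Λ = η'|_Λ = ξ, and let c, c' be nonzero complex numbers such that L(η, c) and L(η', c') are case-VI representations (i.e. the products c₀·⋯·c_{r−1} and c'₀·⋯·c'_{r−1} both equal 1). Then L(η, c) and L(η', c') are isomorphic (via a linear isomorphism intertwining X, Y and every ρ(h)) if and only if there is an integer m with η = η'·χ₁^m and c = c'_m, where (c'_i) denotes the sequence associated to (η', c'). -/

import Mathlib

noncomputable section

/-- `(V, ρ, X, Y)` is a representation of the common part of the rank-2 algebra `A(ξ)`:
`ρ` is a group homomorphism (recorded via multiplicativity and unitality),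
`ρ(h)∘X = χ₁(h)·(X∘ρ(h))` and `ρ(h)∘Y = χ₂(h)·(Y∘ρ(h))` for all `h ∈ Γ`, and
`ρ(g) = ξ(g)·id` for all `g ∈ Λ`. -/
def IsRep {Γ : Type*} [CommGroup Γ] (χ₁ χ₂ : Γ →* ℂˣ) (Λ : Subgroup Γ) (ξ : ↥Λ →* ℂˣ)
    {V : Type*} [AddCommGroup V] [Module ℂ V]
    (ρ : Γ → Module.End ℂ V) (X Y : Module.End ℂ V) : Prop :=
  (∀ a b : Γ, ρ (a * b) = ρ a * ρ b) ∧ ρ 1 = 1 ∧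
  (∀ h : Γ, ρ h * X = (χ₁ h : ℂ) • (X * ρ h)) ∧
  (∀ h : Γ, ρ h * Y = (χ₂ h : ℂ) • (Y * ρ h)) ∧
  ∀ g : Λ, ρ (g : Γ) = (ξ g : ℂ) • (1 : Module.End ℂ V)

/-- A subspace `W` is stable under `X`, `Y` and all `ρ(h)`. -/
def Stable2 {Γ : Type*} {V : Type*} [AddCommGroup V] [Module ℂ V]
    (ρ : Γ → Module.End ℂ V) (X Y : Module.End ℂ V) (W : Submodule ℂ V) : Prop :=
  (∀ v ∈ W, X v ∈ W) ∧ (∀ v ∈ W, Y v ∈ W) ∧ ∀ h : Γ, ∀ v ∈ W, ρ h v ∈ W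

/-- Irreducibility: `V ≠ 0` and the only subspaces stable under `X`, `Y` and all `ρ(h)`
are `0` and `V`. -/
def Irred2 {Γ : Type*} {V : Type*} [AddCommGroup V] [Module ℂ V]
    (ρ : Γ → Module.End ℂ V) (X Y : Module.End ℂ V) : Prop :=
  (∃ v : V, v ≠ 0) ∧ ∀ W : Submodule ℂ V, Stable2 ρ X Y W → W = ⊥ ∨ W = ⊤

/-- The sequence `c_i` defined by `c₀ = c` and
`c_i = q·(c_{i−1} + ν − ν·q^{2(i−1)}·γ)` for `i ≥ 1`. -/
def cseq (q ν γ c : ℂ) : ℕ → ℂ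
  | 0 => c
  | i + 1 => q * (cseq q ν γ c i + ν - ν * q ^ (2 * i) * γ)

/-- `(V, ρ, X, Y)` is a case-VI representation: a representation with in addition
`X^r = id`, `Y^r = id` and `X∘Y = q⁻¹·(Y∘X) + ν·(ρ(g₁g₂) − id)`, where `q = χ₁(g₁)`. -/
def IsRepVI {Γ : Type*} [CommGroup Γ] (g₁ g₂ : Γ) (χ₁ χ₂ : Γ →* ℂˣ) (ν : ℂ)
    (Λ : Subgroup Γ) (ξ : ↥Λ →* ℂˣ) (r : ℕ)
    {V : Type*} [AddCommGroup V] [Module ℂ V]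
    (ρ : Γ → Module.End ℂ V) (X Y : Module.End ℂ V) : Prop :=
  IsRep χ₁ χ₂ Λ ξ ρ X Y ∧ X ^ r = 1 ∧ Y ^ r = 1 ∧
    X * Y = (((χ₁ g₁ : ℂˣ) : ℂ))⁻¹ • (Y * X) + ν • (ρ (g₁ * g₂) - 1)

/-- The action of `h ∈ Γ` on `L(η, c)`, with `ρ(h)·f_i = η(h)·χ₁(h)^i·f_i` on the basis
`(f_i)_{i ∈ ℤ/rℤ}` of `ℤ/rℤ → ℂ`. -/
def wRho (r : ℕ) {Γ : Type*} [CommGroup Γ] (χ₁ η : Γ →* ℂˣ) (h : Γ) :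
    Module.End ℂ (ZMod r → ℂ) where
  toFun v := fun i => (η h : ℂ) * (χ₁ h : ℂ) ^ i.val * v i
  map_add' v w := by funext i; simp [mul_add]
  map_smul' a v := by funext i; simp [smul_eq_mul]; ring

/-- The operator `X` on `L(η, c)`, with `X·f_i = f_{i+1}` (indices modulo `r`). -/
def wX (r : ℕ) : Module.End ℂ (ZMod r → ℂ) where
  toFun v := fun i => v (i - 1)
  map_add' _ _ := rfl
  map_smul' _ _ := rfl

/-- The operator `Y` on `L(η, c)`, with `Y·f_i = c_i·f_{i−1}` (indices modulo `r`,
the index of `c` being read off via the canonical representative in `{0, …, r−1}`). -/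
def wY (r : ℕ) (cs : ℕ → ℂ) : Module.End ℂ (ZMod r → ℂ) where
  toFun v := fun j => cs ((j + 1 : ZMod r).val) * v (j + 1)
  map_add' v w := by funext j; simp [mul_add]
  map_smul' a v := by funext j; simp [smul_eq_mul]; ring

/-!
The basis vector `f_i` of `L(η, c)` is a `ρ`-eigenvector of weight `η χ₁^i`, and `X` permutes
the basis cyclically. An isomorphism `φ` sends `f_0` to a vector with a nonzero coordinate at
some index `m`; comparing `ρ`-weights there gives `η = η' χ₁^m`, and comparing the action of `Y`
(using `f_0 = X f_{-1}`) gives `c = c'_m`. Conversely the cyclic shift by `m` is an isomorphism: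
since `χ₁(g₂) = χ₁(g₁) = q`, the parameter `η(g₁g₂) = q^{2m} η'(g₁g₂)` is exactly the one for
which the recursion started at `c'_m` produces `c'_{i+m}`, and `(c'_i)` is `r`-periodic because
`c_n = q^n c + ν (q − η(g₁g₂) q^n) ∑_{j<n} q^j` and the geometric sum vanishes at `n = r`.
-/

theorem cseq_eq_geom_sum (q ν γ c : ℂ) (n : ℕ) :
    cseq q ν γ c n = q ^ n * c + (ν * q - ν * γ * q ^ n) * ∑ j ∈ Finset.range n, q ^ j := by
  induction n with
  | zero => simp [cseq]
  | succ n ih =>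
    have hsum := (geom_sum_succ (x := q) (n := n)).symm.trans (Finset.sum_range_succ _ n)
    rw [cseq, ih, Finset.sum_range_succ, two_mul, pow_add]
    linear_combination (ν * q) * hsum

theorem cseq_add (q ν γ c : ℂ) (n k : ℕ) :
    cseq q ν γ c (n + k) = cseq q ν (q ^ (2 * k) * γ) (cseq q ν γ c k) n := by
  induction n with
  | zero => simp [cseq]
  | succ n ih =>
    rw [Nat.add_right_comm, cseq, ih, cseq]
    ring

theorem cseq_periodic {q : ℂ} {r : ℕ} (hr : 1 < r) (hq : IsPrimitiveRoot q r) (ν γ c : ℂ) :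
    Function.Periodic (cseq q ν γ c) r := by
  intro n
  have hq2r : q ^ (2 * r) = 1 := by rw [pow_mul', hq.pow_eq_one, one_pow]
  have hcr : cseq q ν γ c r = c := by
    rw [cseq_eq_geom_sum, hq.geom_sum_eq_zero hr, hq.pow_eq_one]
    ring
  rw [cseq_add, hq2r, one_mul, hcr]

section IsoL

variable {r : ℕ} {Γ : Type*} [CommGroup Γ] {χ₁ η η' : Γ →* ℂˣ} {cs cs' : ℕ → ℂ}

/-- `φ` is an isomorphism `L(η, cs) ≅ L(η', cs')`. -/
def IsIsoL (r : ℕ) (χ₁ η η' : Γ →* ℂˣ) (cs cs' : ℕ → ℂ)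
    (φ : (ZMod r → ℂ) ≃ₗ[ℂ] (ZMod r → ℂ)) : Prop :=
  (∀ v, φ (wX r v) = wX r (φ v)) ∧ (∀ v, φ (wY r cs v) = wY r cs' (φ v)) ∧
    ∀ h v, φ (wRho r χ₁ η h v) = wRho r χ₁ η' h (φ v)

theorem wX_single (i : ZMod r) : wX r (Pi.single i 1) = Pi.single (i + 1) 1 := by
  funext j
  simp only [wX, LinearMap.coe_mk, AddHom.coe_mk, Pi.single_apply, sub_eq_iff_eq_add]

theorem wY_single (i : ZMod r) : wY r cs (Pi.single i 1) = cs i.val • Pi.single (i - 1) 1 := by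
  funext j
  by_cases hj : j + 1 = i
  · subst hj
    simp [wY]
  · have hj' : j ≠ i - 1 := fun h => hj (by rw [h, sub_add_cancel])
    simp [wY, hj, hj']

theorem wRho_single (h : Γ) (i : ZMod r) :
    wRho r χ₁ η h (Pi.single i 1) = ((η h : ℂ) * (χ₁ h : ℂ) ^ i.val) • Pi.single i 1 := by
  funext j
  by_cases hj : j = i
  · subst hj; simp [wRho]
  · simp [wRho, hj]

theorem IsIsoL.exists_eq_mul_pow {φ : (ZMod r → ℂ) ≃ₗ[ℂ] (ZMod r → ℂ)}
    (hφ : IsIsoL r χ₁ η η' cs cs' φ) : ∃ m : ℕ, η = η' * χ₁ ^ m ∧ cs 0 = cs' m := by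
  obtain ⟨hX, hY, hρ⟩ := hφ
  let f : ZMod r → ZMod r → ℂ := fun i => Pi.single i 1
  obtain ⟨j, hj⟩ : ∃ j, φ (f 0) j ≠ 0 := Function.ne_iff.mp <|
    (map_ne_zero_iff φ φ.injective).mpr (Pi.single_ne_zero_iff.mpr one_ne_zero)
  refine ⟨j.val, ?_, ?_⟩
  · ext h
    have hweight := congrFun (hρ h (f 0)) j
    simp only [f, wRho_single, ZMod.val_zero, pow_zero, mul_one, map_smul, Pi.smul_apply,
      smul_eq_mul] at hweight
    simpa [wRho] using mul_right_cancel₀ hj hweight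
  · have hshift : φ (f 0) j = φ (f (-1)) (j - 1) := by
      rw [show f 0 = wX r (f (-1)) by simp [f, wX_single], hX]
      rfl
    have hc := congrFun (hY (f 0)) (j - 1)
    simp only [f, wY_single, ZMod.val_zero, zero_sub, map_smul, Pi.smul_apply, smul_eq_mul]
      at hc
    simp only [wY, LinearMap.coe_mk, AddHom.coe_mk, sub_add_cancel] at hc
    rw [← hshift] at hc
    exact mul_right_cancel₀ hj hc

theorem isIsoL_funCongrLeft_subRight [NeZero r] (hχ : χ₁ ^ r = 1)
    (hcs' : Function.Periodic cs' r) (m : ℕ) (hη : η = η' * χ₁ ^ m)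
    (hcs : ∀ k, cs k = cs' (k + m)) :
    IsIsoL r χ₁ η η' cs cs' (LinearEquiv.funCongrLeft ℂ ℂ (Equiv.subRight (m : ZMod r))) := by
  have hval (i : ZMod r) : (i - m).val + m ≡ i.val [MOD r] := by
    rw [← ZMod.natCast_eq_natCast_iff]
    simp
  refine ⟨fun v => ?_, fun v => ?_, fun h v => ?_⟩ <;> funext i <;>
    simp only [LinearEquiv.funCongrLeft_apply, LinearMap.funLeft_apply, Equiv.subRight_apply,
      wX, wY, wRho, LinearMap.coe_mk, AddHom.coe_mk]
  · rw [sub_right_comm]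
  · rw [sub_add_eq_add_sub, hcs, ← hcs'.map_mod_nat, hval, hcs'.map_mod_nat]
  · have hχh : (χ₁ h : ℂ) ^ r = 1 := by
      rw [← Units.val_pow_eq_pow_val, ← MonoidHom.pow_apply, hχ]; rfl
    rw [hη, MonoidHom.mul_apply, MonoidHom.pow_apply, Units.val_mul, Units.val_pow_eq_pow_val,
      mul_assoc (η' h : ℂ), ← pow_add, add_comm m, pow_eq_pow_of_modEq (hval i) hχh]

end IsoL

theorem caseVI_iso_iff_general {Γ : Type*} [CommGroup Γ] (g₁ g₂ : Γ)
    (χ₁ χ₂ : Γ →* ℂˣ) (hχ₂ : χ₂ = χ₁⁻¹) (h12 : χ₁ g₂ * χ₂ g₁ = 1)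
    (r : ℕ) (hr : 1 < r) (hord : orderOf χ₁ = r)
    (hq : IsPrimitiveRoot ((χ₁ g₁ : ℂˣ) : ℂ) r)
    (ν : ℂ)
    (η η' : Γ →* ℂˣ)
    (c c' : ℂ) :
    (∃ φ : (ZMod r → ℂ) ≃ₗ[ℂ] (ZMod r → ℂ),
        (∀ v : ZMod r → ℂ, φ (wX r v) = wX r (φ v)) ∧
        (∀ v : ZMod r → ℂ,
          φ (wY r (cseq ((χ₁ g₁ : ℂˣ) : ℂ) ν ((η (g₁ * g₂) : ℂˣ) : ℂ) c) v) =
            wY r (cseq ((χ₁ g₁ : ℂˣ) : ℂ) ν ((η' (g₁ * g₂) : ℂˣ) : ℂ) c') (φ v)) ∧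
        ∀ (h : Γ) (v : ZMod r → ℂ), φ (wRho r χ₁ η h v) = wRho r χ₁ η' h (φ v)) ↔
      ∃ m : ℕ, η = η' * χ₁ ^ m ∧
        c = cseq ((χ₁ g₁ : ℂˣ) : ℂ) ν ((η' (g₁ * g₂) : ℂˣ) : ℂ) c' m := by
  constructor
  · rintro ⟨φ, hφ⟩
    exact IsIsoL.exists_eq_mul_pow hφ
  · rintro ⟨m, hη, hc⟩
    have : NeZero r := ⟨by omega⟩
    have hg₂ : χ₁ g₂ = χ₁ g₁ := by
      rwa [hχ₂, MonoidHom.inv_apply, mul_inv_eq_one] at h12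
    have hγ : ((η (g₁ * g₂) : ℂˣ) : ℂ) =
        ((χ₁ g₁ : ℂˣ) : ℂ) ^ (2 * m) * ((η' (g₁ * g₂) : ℂˣ) : ℂ) := by
      rw [hη, MonoidHom.mul_apply, MonoidHom.pow_apply, map_mul χ₁, hg₂]
      push_cast
      ring
    exact ⟨_, isIsoL_funCongrLeft_subRight (hord ▸ pow_orderOf_eq_one χ₁)
      (cseq_periodic hr hq _ _ _) m hη fun k => by rw [cseq_add, ← hγ, ← hc]⟩

/-- Case (VI)(ii): for characters `η, η'` of `Γ` restricting to `ξ` on `Λ` and nonzero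
`c, c'` such that `L(η, c)` and `L(η', c')` are case-VI representations (i.e. the
products `c₀·⋯·c_{r−1}` and `c'₀·⋯·c'_{r−1}` both equal 1), `L(η, c)` and `L(η', c')`
are isomorphic via a linear isomorphism intertwining `X`, `Y` and every `ρ(h)` if and
only if there is an integer `m ≥ 0` with `η = η'·χ₁^m` and `c = c'_m` (both conditions
being `r`-periodic in `m`, nonnegative `m` suffice). -/
theorem caseVI_iso_iff {Γ : Type*} [CommGroup Γ] [Fintype Γ] (g₁ g₂ : Γ)
    (χ₁ χ₂ : Γ →* ℂˣ) (hχ₂ : χ₂ = χ₁⁻¹) (h12 : χ₁ g₂ * χ₂ g₁ = 1)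
    (r : ℕ) (hr : 1 < r) (hord : orderOf χ₁ = r)
    (hq : IsPrimitiveRoot ((χ₁ g₁ : ℂˣ) : ℂ) r)
    (ν : ℂ) (hν : ν ≠ 0)
    (Λ : Subgroup Γ) (hΛ : ∀ g : Γ, g ∈ Λ ↔ (χ₁ g = 1 ∧ χ₂ g = 1)) (ξ : ↥Λ →* ℂˣ)
    (η η' : Γ →* ℂˣ) (hη : ∀ g : Λ, η (g : Γ) = ξ g) (hη' : ∀ g : Λ, η' (g : Γ) = ξ g)
    (c c' : ℂ) (hc : c ≠ 0) (hc' : c' ≠ 0)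
    (hprod : ∏ i ∈ Finset.range r,
      cseq ((χ₁ g₁ : ℂˣ) : ℂ) ν ((η (g₁ * g₂) : ℂˣ) : ℂ) c i = 1)
    (hprod' : ∏ i ∈ Finset.range r,
      cseq ((χ₁ g₁ : ℂˣ) : ℂ) ν ((η' (g₁ * g₂) : ℂˣ) : ℂ) c' i = 1) :
    (∃ φ : (ZMod r → ℂ) ≃ₗ[ℂ] (ZMod r → ℂ),
        (∀ v : ZMod r → ℂ, φ (wX r v) = wX r (φ v)) ∧
        (∀ v : ZMod r → ℂ,
          φ (wY r (cseq ((χ₁ g₁ : ℂˣ) : ℂ) ν ((η (g₁ * g₂) : ℂˣ) : ℂ) c) v) =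
            wY r (cseq ((χ₁ g₁ : ℂˣ) : ℂ) ν ((η' (g₁ * g₂) : ℂˣ) : ℂ) c') (φ v)) ∧
        ∀ (h : Γ) (v : ZMod r → ℂ), φ (wRho r χ₁ η h v) = wRho r χ₁ η' h (φ v)) ↔
      ∃ m : ℕ, η = η' * χ₁ ^ m ∧
        c = cseq ((χ₁ g₁ : ℂˣ) : ℂ) ν ((η' (g₁ * g₂) : ℂˣ) : ℂ) c' m :=
  caseVI_iso_iff_general g₁ g₂ χ₁ χ₂ hχ₂ h12 r hr hord hq ν η η' c c'
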